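/- Let f, h be probability densities on ℝ with finite first moments. Then for every N ≥ 1, d_{T1,N}(f^{⊗N}, h^{⊗N}) ≤ √N · d_{T1,1}(f, h). Moreover the √N dependence is optimal when the means differ: if m_f = ∫ v f(v) dv and m_h = ∫ v h(v) dv, then d_{T1,N}(f^{⊗N}, h^{⊗N}) ≥ √N · |m_f − m_h|. -/

import Mathlib

open MeasureTheory Real Finset

noncomputable section

/-- The state space of `N` one-dimensional velocities. -/
abbrev V (N : ℕ) := Fin N → ℝ

/-- A probability density on `ℝ^N`. -/
def IsProbDensity {N : ℕ} (F : V N → ℝ) : Prop :=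
  (∀ v, 0 ≤ F v) ∧ Integrable F ∧ ∫ v, F v = 1

/-- A probability density on `ℝ`. -/
def IsProbDensity1 (g : ℝ → ℝ) : Prop :=
  (∀ x, 0 ≤ g x) ∧ Integrable g ∧ ∫ x, g x = 1

/-- The velocity vector after the Kac collision of particles `i` and `j` with angle `θ`. -/
def collide {N : ℕ} (v : V N) (i j : Fin N) (θ : ℝ) : V N :=
  Function.update (Function.update v i (v i * Real.cos θ + v j * Real.sin θ)) j
    (-(v i) * Real.sin θ + v j * Real.cos θ)

/-- Kac's collision operator `Q`. -/
def QOp {N : ℕ} (F : V N → ℝ) : V N → ℝ := fun v =>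
  (N.choose 2 : ℝ)⁻¹ * ∑ i : Fin N, ∑ j : Fin N,
    if i < j then (2 * π)⁻¹ * ∫ θ in (0:ℝ)..(2 * π), F (collide v i j θ) else 0

/-- The thermostat operator `R_j` with reservoir distribution `g`. -/
def ROp {N : ℕ} (g : ℝ → ℝ) (j : Fin N) (F : V N → ℝ) : V N → ℝ := fun v =>
  ∫ w : ℝ, (2 * π)⁻¹ * ∫ θ in (0:ℝ)..(2 * π),
    g (w * Real.cos θ - v j * Real.sin θ) *
      F (Function.update v j (v j * Real.cos θ + w * Real.sin θ))

/-- The fixed point operator `Φ = γ Q + (1-γ) (1/N) ∑ⱼ Rⱼ`. -/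
def PhiOp {N : ℕ} (γ : ℝ) (g : ℝ → ℝ) (F : V N → ℝ) : V N → ℝ := fun v =>
  γ * QOp F v + (1 - γ) * (N : ℝ)⁻¹ * ∑ j : Fin N, ROp g j F v

/-- Fourier transform of a density on `ℝ^N`. -/
def ft {N : ℕ} (f : V N → ℝ) (ξ : V N) : ℂ :=
  ∫ v : V N, (f v : ℂ) * Complex.exp (-Complex.I * ((∑ i, v i * ξ i : ℝ) : ℂ))

/-- Fourier transform of a density on `ℝ`. -/
def ft1 (f : ℝ → ℝ) (ξ : ℝ) : ℂ :=
  ∫ v : ℝ, (f v : ℂ) * Complex.exp (-Complex.I * ((v * ξ : ℝ) : ℂ))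

/-- The Gabetta–Toscani–Wennberg distance on `ℝ^N`. -/
def dGTW {N : ℕ} (f h : V N → ℝ) : ℝ :=
  ⨆ ξ : {ξ : V N // ξ ≠ 0}, ‖ft f ξ.1 - ft h ξ.1‖ / (∑ i, (ξ.1 i) ^ 2)

/-- The `T1` distance on `ℝ^N`. -/
def dT1 {N : ℕ} (f h : V N → ℝ) : ℝ :=
  ⨆ ξ : {ξ : V N // ξ ≠ 0}, ‖ft f ξ.1 - ft h ξ.1‖ / Real.sqrt (∑ i, (ξ.1 i) ^ 2)

/-- The Gabetta–Toscani–Wennberg distance on `ℝ`. -/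
def dGTW1 (f h : ℝ → ℝ) : ℝ :=
  ⨆ ξ : {ξ : ℝ // ξ ≠ 0}, ‖ft1 f ξ.1 - ft1 h ξ.1‖ / (ξ.1) ^ 2

/-- The `T1` distance on `ℝ`. -/
def dT11 (f h : ℝ → ℝ) : ℝ :=
  ⨆ ξ : {ξ : ℝ // ξ ≠ 0}, ‖ft1 f ξ.1 - ft1 h ξ.1‖ / |ξ.1|

/-- `F : ℝ → V N → ℝ` is a solution of the coupled Kac master equation
`∂ₜ F = -λN(I-Q)[F] - μ ∑ⱼ (I-Rⱼ)[F]`. -/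
def IsSolution {N : ℕ} (lam mu : ℝ) (g : ℝ → ℝ) (F : ℝ → V N → ℝ) : Prop :=
  (∀ t, IsProbDensity (F t)) ∧
    ∀ t v, HasDerivAt (fun s => F s v)
      (-(lam * N) * (F t v - QOp (F t) v) - mu * ∑ j : Fin N, (F t v - ROp g j (F t) v)) t

/-- `N`-fold tensor power of a density on `ℝ`. -/
def tensorPow (f : ℝ → ℝ) (N : ℕ) : V N → ℝ := fun v => ∏ i, f (v i)

/-- First marginal of a density on `ℝ^N`. -/
def marg1 {N : ℕ} (F : V N → ℝ) : ℝ → ℝ := fun x =>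
  ∫ w : V (N - 1),
    F (fun i => if h : (i : ℕ) = 0 then x else w ⟨(i : ℕ) - 1, by have := i.isLt; omega⟩)

/-- The `k`-th marginal of a density on `ℝ^N`. -/
def marg {N : ℕ} (k : ℕ) (F : V N → ℝ) : V k → ℝ := fun u =>
  ∫ w : V (N - k),
    F (fun i => if h : (i : ℕ) < k then u ⟨(i : ℕ), h⟩
        else w ⟨(i : ℕ) - k, by have := i.isLt; omega⟩)

/-- A density symmetric under permutations of the variables. -/
def IsSymmetric {N : ℕ} (F : V N → ℝ) : Prop :=
  ∀ σ : Equiv.Perm (Fin N), ∀ v : V N, F (v ∘ σ) = F v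

/-- `π` is a coupling of `μ` and `ν`. -/
def Coupling {α β : Type*} [MeasurableSpace α] [MeasurableSpace β]
    (γ : Measure (α × β)) (μ : Measure α) (ν : Measure β) : Prop :=
  γ.map Prod.fst = μ ∧ γ.map Prod.snd = ν

/-- Wasserstein-2 distance between measures on `ℝ^N` (Euclidean cost). -/
def W2 {N : ℕ} (μ ν : Measure (V N)) : ℝ :=
  sInf {c | ∃ γ : Measure (V N × V N), Coupling γ μ ν ∧
    c = Real.sqrt (∫ p, ∑ i, (p.1 i - p.2 i) ^ 2 ∂γ)}

/-- Wasserstein-2 distance between measures on `ℝ`. -/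
def W2r (μ ν : Measure ℝ) : ℝ :=
  sInf {c | ∃ γ : Measure (ℝ × ℝ), Coupling γ μ ν ∧
    c = Real.sqrt (∫ p, (p.1 - p.2) ^ 2 ∂γ)}

/-- The measure on `ℝ^N` with density `F`. -/
def densMeasure {N : ℕ} (F : V N → ℝ) : Measure (V N) :=
  volume.withDensity fun v => ENNReal.ofReal (F v)

/-- The measure on `ℝ` with density `f`. -/
def densMeasure1 (f : ℝ → ℝ) : Measure ℝ :=
  volume.withDensity fun x => ENNReal.ofReal (f x)

/-! The Fourier transform of `f^{⊗N}` at `ξ` is `∏ᵢ f̂(ξᵢ)`, a product of factors of modulus at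
most one, so `|f̂^{⊗N}(ξ) - ĥ^{⊗N}(ξ)| ≤ ∑ᵢ |f̂(ξᵢ) - ĥ(ξᵢ)| ≤ d_{T1}(f, h) ∑ᵢ |ξᵢ|`, and
`∑ᵢ |ξᵢ| ≤ √N |ξ|` by Cauchy–Schwarz. The first moments make `f̂` and `ĥ` Lipschitz, which is what
makes the supremum defining `d_{T1}(f, h)` finite.

For the lower bound, restrict to the diagonal `ξ = (s, …, s)`, where `|ξ| = √N |s|`: the function
`s ↦ f̂(s)^N - ĥ(s)^N` vanishes at `0` with derivative `-iN(m_f - m_h)` there, and a function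
bounded by `C |s|` has a derivative of norm at most `C` at `0`. -/

open FourierTransform

lemma ft1_eq_fourier (g : ℝ → ℝ) (ξ : ℝ) :
    ft1 g ξ = 𝓕 (fun x => (g x : ℂ)) (ξ / (2 * π)) := by
  rw [ft1, Real.fourier_real_eq_integral_exp_smul]
  congr 1 with v
  rw [smul_eq_mul, mul_comm]
  congr 2
  push_cast
  field_simp

lemma hasDerivAt_ft1 {g : ℝ → ℝ} (hg : Integrable g) (hg1 : Integrable fun x => x * g x)
    (ξ : ℝ) : HasDerivAt (ft1 g) (-Complex.I * ft1 (fun x => x * g x) ξ) ξ := by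
  have hG1 : Integrable fun x : ℝ => x • (g x : ℂ) := by
    simpa [Complex.real_smul] using hg1.ofReal (𝕜 := ℂ)
  have hF := (Real.hasDerivAt_fourier hg.ofReal hG1 (ξ / (2 * π))).scomp ξ
    ((hasDerivAt_id ξ).div_const (2 * π))
  rw [show ft1 g = _ from funext (ft1_eq_fourier g)]
  refine hF.congr_deriv ?_
  rw [ft1, Real.fourier_real_eq_integral_exp_smul, ← integral_const_mul, ← integral_smul]
  congr 1 with x
  simp only [smul_eq_mul, Complex.real_smul]
  push_cast
  field_simp

lemma norm_ft1_le (g : ℝ → ℝ) (ξ : ℝ) : ‖ft1 g ξ‖ ≤ ∫ x, |g x| := by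
  refine (norm_integral_le_integral_norm _).trans_eq (congr_arg _ (funext fun x => ?_))
  simp [Complex.norm_exp]

lemma ft1_zero (g : ℝ → ℝ) : ft1 g 0 = ∫ x, g x := by
  simp [ft1, integral_complex_ofReal]

lemma norm_ft1_sub_ft1_le {g : ℝ → ℝ} (hg : Integrable g) (hg1 : Integrable fun x => x * g x)
    (ξ η : ℝ) : ‖ft1 g ξ - ft1 g η‖ ≤ (∫ x, |x * g x|) * |ξ - η| := by
  refine Convex.norm_image_sub_le_of_norm_hasDerivWithin_le
    (fun x _ => (hasDerivAt_ft1 hg hg1 x).hasDerivWithinAt) (fun x _ => ?_) convex_univ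
    (Set.mem_univ η) (Set.mem_univ ξ)
  simpa using norm_ft1_le (fun x => x * g x) x

lemma IsProbDensity1.ft1_zero_eq_one {g : ℝ → ℝ} (hg : IsProbDensity1 g) : ft1 g 0 = 1 := by
  rw [ft1_zero, hg.2.2, Complex.ofReal_one]

lemma IsProbDensity1.norm_ft1_le_one {g : ℝ → ℝ} (hg : IsProbDensity1 g) (ξ : ℝ) :
    ‖ft1 g ξ‖ ≤ 1 := by
  have habs : (fun x => |g x|) = g := funext fun x => abs_of_nonneg (hg.1 x)
  simpa [habs, hg.2.2] using norm_ft1_le g ξ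

lemma IsProbDensity1.norm_ft1_sub_le {f h : ℝ → ℝ} (hf : IsProbDensity1 f)
    (hh : IsProbDensity1 h) (hf1 : Integrable fun x => x * f x)
    (hh1 : Integrable fun x => x * h x) (ξ : ℝ) :
    ‖ft1 f ξ - ft1 h ξ‖ ≤ ((∫ x, |x * f x|) + ∫ x, |x * h x|) * |ξ| := by
  have hf' := norm_ft1_sub_ft1_le hf.2.1 hf1 ξ 0
  have hh' := norm_ft1_sub_ft1_le hh.2.1 hh1 ξ 0
  rw [hf.ft1_zero_eq_one, sub_zero] at hf'
  rw [hh.ft1_zero_eq_one, sub_zero] at hh'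
  calc ‖ft1 f ξ - ft1 h ξ‖ = ‖(ft1 f ξ - 1) - (ft1 h ξ - 1)‖ := by ring_nf
    _ ≤ ‖ft1 f ξ - 1‖ + ‖ft1 h ξ - 1‖ := norm_sub_le _ _
    _ ≤ _ := by rw [add_mul]; exact add_le_add hf' hh'

lemma dT11_nonneg (f h : ℝ → ℝ) : 0 ≤ dT11 f h :=
  Real.iSup_nonneg fun _ => div_nonneg (norm_nonneg _) (abs_nonneg _)

lemma norm_ft1_sub_le_dT11_mul {f h : ℝ → ℝ} {C : ℝ}
    (hC : ∀ ξ, ‖ft1 f ξ - ft1 h ξ‖ ≤ C * |ξ|) (ξ : ℝ) :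
    ‖ft1 f ξ - ft1 h ξ‖ ≤ dT11 f h * |ξ| := by
  rcases eq_or_ne ξ 0 with rfl | hξ
  · simpa using hC 0
  have hbdd : BddAbove (Set.range fun ζ : {ζ : ℝ // ζ ≠ 0} => ‖ft1 f ζ - ft1 h ζ‖ / |ζ.1|) :=
    ⟨C, by rintro _ ⟨ζ, rfl⟩; exact (div_le_iff₀ (abs_pos.2 ζ.2)).2 (hC ζ)⟩
  exact (div_le_iff₀ (abs_pos.2 hξ)).1 (le_ciSup hbdd ⟨ξ, hξ⟩)

lemma norm_prod_sub_prod_le {ι R : Type*} [NormedCommRing R] [NormOneClass R]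
    (s : Finset ι) {a b : ι → R} (ha : ∀ i ∈ s, ‖a i‖ ≤ 1) (hb : ∀ i ∈ s, ‖b i‖ ≤ 1) :
    ‖∏ i ∈ s, a i - ∏ i ∈ s, b i‖ ≤ ∑ i ∈ s, ‖a i - b i‖ := by
  classical
  induction s using Finset.induction_on with
  | empty => simp
  | insert i s his ih =>
    simp only [mem_insert, forall_eq_or_imp] at ha hb
    rw [prod_insert his, prod_insert his, sum_insert his]
    have hprod : ‖∏ j ∈ s, a j‖ ≤ 1 :=
      (Finset.norm_prod_le _ _).trans (prod_le_one (fun _ _ => norm_nonneg _) ha.2)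
    calc ‖a i * ∏ j ∈ s, a j - b i * ∏ j ∈ s, b j‖
        = ‖(a i - b i) * ∏ j ∈ s, a j + b i * (∏ j ∈ s, a j - ∏ j ∈ s, b j)‖ := by ring_nf
      _ ≤ ‖a i - b i‖ * ‖∏ j ∈ s, a j‖ + ‖b i‖ * ‖∏ j ∈ s, a j - ∏ j ∈ s, b j‖ :=
          (norm_add_le _ _).trans (add_le_add (norm_mul_le _ _) (norm_mul_le _ _))
      _ ≤ ‖a i - b i‖ * 1 + 1 * ∑ j ∈ s, ‖a j - b j‖ := by
          gcongr
          exacts [hb.1, ih ha.2 hb.2]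
      _ = ‖a i - b i‖ + ∑ j ∈ s, ‖a j - b j‖ := by ring

lemma sum_abs_le_sqrt_card_mul_sqrt_sum_sq {N : ℕ} (ξ : Fin N → ℝ) :
    ∑ i, |ξ i| ≤ √N * √(∑ i, ξ i ^ 2) := by
  rw [← Real.sqrt_mul (Nat.cast_nonneg N)]
  refine Real.le_sqrt_of_sq_le ?_
  simpa [sq_abs] using sq_sum_le_card_mul_sum_sq (s := univ) (f := fun i => |ξ i|)

lemma ft_tensorPow (g : ℝ → ℝ) {N : ℕ} (ξ : V N) :
    ft (tensorPow g N) ξ = ∏ i, ft1 g (ξ i) := by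
  simp only [ft, ft1]
  rw [← integral_fintype_prod_eq_prod
    (f := fun (i : Fin N) (v : ℝ) => (g v : ℂ) * Complex.exp (-Complex.I * ((v * ξ i : ℝ) : ℂ)))]
  congr 1 with v
  rw [prod_mul_distrib, tensorPow, ← Complex.exp_sum]
  push_cast [mul_sum]
  rfl

lemma norm_ft_tensorPow_sub_le {f h : ℝ → ℝ} (hf : IsProbDensity1 f) (hh : IsProbDensity1 h)
    {D : ℝ} (hD : ∀ ξ, ‖ft1 f ξ - ft1 h ξ‖ ≤ D * |ξ|) {N : ℕ} (ξ : V N) :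
    ‖ft (tensorPow f N) ξ - ft (tensorPow h N) ξ‖ ≤ √N * D * √(∑ i, ξ i ^ 2) := by
  have hD0 : 0 ≤ D := by simpa using (norm_nonneg _).trans (hD 1)
  rw [ft_tensorPow, ft_tensorPow]
  calc ‖∏ i, ft1 f (ξ i) - ∏ i, ft1 h (ξ i)‖
      ≤ ∑ i, ‖ft1 f (ξ i) - ft1 h (ξ i)‖ :=
        norm_prod_sub_prod_le _ (fun i _ => hf.norm_ft1_le_one _) (fun i _ => hh.norm_ft1_le_one _)
    _ ≤ ∑ i, D * |ξ i| := sum_le_sum fun i _ => hD (ξ i)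
    _ ≤ √N * D * √(∑ i, ξ i ^ 2) := by
        rw [← mul_sum, mul_comm √(N : ℝ), mul_assoc]
        exact mul_le_mul_of_nonneg_left (sum_abs_le_sqrt_card_mul_sqrt_sum_sq ξ) hD0

lemma sqrt_sum_sq_pos {N : ℕ} {ξ : V N} (hξ : ξ ≠ 0) : 0 < √(∑ i, ξ i ^ 2) := by
  refine Real.sqrt_pos.2 (Fintype.sum_pos (lt_of_le_of_ne (fun i => sq_nonneg (ξ i)) fun h => ?_))
  exact hξ (funext fun i => by simpa using (congrFun h i).symm)

lemma dT1_nonneg {N : ℕ} (F H : V N → ℝ) : 0 ≤ dT1 F H :=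
  Real.iSup_nonneg fun _ => div_nonneg (norm_nonneg _) (Real.sqrt_nonneg _)

lemma dT1_le {N : ℕ} {F H : V N → ℝ} {C : ℝ} (hC0 : 0 ≤ C)
    (hC : ∀ ξ : V N, ‖ft F ξ - ft H ξ‖ ≤ C * √(∑ i, ξ i ^ 2)) : dT1 F H ≤ C :=
  Real.iSup_le (fun ξ => div_le_of_le_mul₀ (Real.sqrt_nonneg _) hC0 (hC ξ.1)) hC0

lemma norm_ft_sub_le_dT1_mul {N : ℕ} {F H : V N → ℝ} {C : ℝ}
    (hC : ∀ ξ : V N, ‖ft F ξ - ft H ξ‖ ≤ C * √(∑ i, ξ i ^ 2)) (ξ : V N) :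
    ‖ft F ξ - ft H ξ‖ ≤ dT1 F H * √(∑ i, ξ i ^ 2) := by
  rcases eq_or_ne ξ 0 with rfl | hξ
  · simpa using hC 0
  have hbdd : BddAbove (Set.range fun ζ : {ζ : V N // ζ ≠ 0} =>
      ‖ft F ζ - ft H ζ‖ / √(∑ i, ζ.1 i ^ 2)) :=
    ⟨C, by rintro _ ⟨ζ, rfl⟩; exact (div_le_iff₀ (sqrt_sum_sq_pos ζ.2)).2 (hC ζ)⟩
  exact (div_le_iff₀ (sqrt_sum_sq_pos hξ)).1 (le_ciSup hbdd ⟨ξ, hξ⟩)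

lemma HasDerivAt.norm_le_of_lip {𝕜 F : Type*} [NontriviallyNormedField 𝕜]
    [NormedAddCommGroup F] [NormedSpace 𝕜 F] {φ : 𝕜 → F} {φ' : F} {x₀ : 𝕜}
    (hφ : HasDerivAt φ φ' x₀) {C : ℝ} (hC : 0 ≤ C) (h : ∀ x, ‖φ x - φ x₀‖ ≤ C * ‖x - x₀‖) :
    ‖φ'‖ ≤ C := by
  simpa using hφ.hasFDerivAt.le_of_lip' hC (Filter.Eventually.of_forall h)

lemma sqrt_mul_abs_sub_le_of_norm_ft_tensorPow_sub_le {f h : ℝ → ℝ}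
    (hf : IsProbDensity1 f) (hh : IsProbDensity1 h)
    (hf1 : Integrable fun x => x * f x) (hh1 : Integrable fun x => x * h x) {N : ℕ} {C : ℝ}
    (hC0 : 0 ≤ C)
    (hC : ∀ ξ : V N, ‖ft (tensorPow f N) ξ - ft (tensorPow h N) ξ‖ ≤ C * √(∑ i, ξ i ^ 2)) :
    √N * |(∫ x, x * f x) - ∫ x, x * h x| ≤ C := by
  set Δ := (∫ x, x * f x) - ∫ x, x * h x
  have hderiv : HasDerivAt (ft1 f ^ N - ft1 h ^ N) (N * (-Complex.I * Δ)) 0 := by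
    refine (((hasDerivAt_ft1 hf.2.1 hf1 0).pow N).sub
      ((hasDerivAt_ft1 hh.2.1 hh1 0).pow N)).congr_deriv ?_
    rw [hf.ft1_zero_eq_one, hh.ft1_zero_eq_one, ft1_zero, ft1_zero]
    push_cast [Δ]
    ring
  have hdiag : ∀ s : ℝ, ‖(ft1 f ^ N - ft1 h ^ N) s - (ft1 f ^ N - ft1 h ^ N) 0‖
      ≤ √N * C * ‖s - 0‖ := by
    intro s
    have := hC fun _ => s
    rw [ft_tensorPow, ft_tensorPow, sum_const, card_univ, Fintype.card_fin, nsmul_eq_mul,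
      Real.sqrt_mul (Nat.cast_nonneg N), Real.sqrt_sq_eq_abs] at this
    simpa [hf.ft1_zero_eq_one, hh.ft1_zero_eq_one, mul_comm, mul_left_comm] using this
  have hnorm := hderiv.norm_le_of_lip (by positivity) hdiag
  rw [norm_mul, norm_mul, norm_neg, Complex.norm_I, one_mul, Complex.norm_natCast,
    Complex.norm_real, Real.norm_eq_abs] at hnorm
  rcases (Real.sqrt_nonneg N).eq_or_lt with hzero | hpos
  · rwa [← hzero, zero_mul]
  · refine le_of_mul_le_mul_left ?_ hpos
    rwa [← mul_assoc, Real.mul_self_sqrt (Nat.cast_nonneg N)]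

theorem statement_17_general (f h : ℝ → ℝ) (hf : IsProbDensity1 f) (hh : IsProbDensity1 h)
    (hf1 : Integrable (fun x => x * f x)) (hh1 : Integrable (fun x => x * h x))
    (N : ℕ) :
    dT1 (tensorPow f N) (tensorPow h N) ≤ Real.sqrt N * dT11 f h ∧
      Real.sqrt N * |(∫ x, x * f x) - ∫ x, x * h x| ≤
        dT1 (tensorPow f N) (tensorPow h N) := by
  have hD := norm_ft1_sub_le_dT11_mul (hf.norm_ft1_sub_le hh hf1 hh1)
  have hupper := norm_ft_tensorPow_sub_le hf hh hD (N := N)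
  exact ⟨dT1_le (mul_nonneg (Real.sqrt_nonneg _) (dT11_nonneg f h)) hupper,
    sqrt_mul_abs_sub_le_of_norm_ft_tensorPow_sub_le hf hh hf1 hh1 (dT1_nonneg _ _)
      (norm_ft_sub_le_dT1_mul hupper)⟩

theorem statement_17 (f h : ℝ → ℝ) (hf : IsProbDensity1 f) (hh : IsProbDensity1 h)
    (hf1 : Integrable (fun x => x * f x)) (hh1 : Integrable (fun x => x * h x))
    (N : ℕ) (hN : 1 ≤ N) :
    dT1 (tensorPow f N) (tensorPow h N) ≤ Real.sqrt N * dT11 f h ∧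
      Real.sqrt N * |(∫ x, x * f x) - ∫ x, x * h x| ≤
        dT1 (tensorPow f N) (tensorPow h N) :=
  statement_17_general f h hf hh hf1 hh1 N

end
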